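/- Let V have a weight taking only negative values. The set G^{SSR}(V) of maps of the form x ↦ x + f(x) with f strictly subresonant (ϖ(f) < 0) is a group under composition, and it is a normal subgroup of the group G^{SR}(V) of invertible subresonant polynomial maps of V. Moreover, if the weight takes only negative values, G^{SSR}(V) contains all translations of V. -/

import Mathlib

structure Weight (V : Type*) [AddCommGroup V] [Module ℝ V] where
  w : V → EReal
  ne_top : ∀ v, w v ≠ ⊤
  eq_bot_iff : ∀ v, w v = ⊥ ↔ v = 0
  smul_eq : ∀ (c : ℝ), c ≠ 0 → ∀ v, w (c • v) = w v
  add_le : ∀ v u, w (v + u) ≤ max (w v) (w u)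

/-- The weight of a `k`-multilinear map:
`ϖ(T) = max{ϖ_W(T(v₁,…,v_k)) - ∑ᵢ ϖ_V(vᵢ) : vᵢ ≠ 0}`. -/
noncomputable def mwt {V W : Type*} [AddCommGroup V] [Module ℝ V]
    [AddCommGroup W] [Module ℝ W] (wV : Weight V) (wW : Weight W) {k : ℕ}
    (T : MultilinearMap ℝ (fun _ : Fin k => V) W) : EReal :=
  ⨆ (v : Fin k → V) (_ : ∀ i, v i ≠ 0), (wW.w (T v) - ∑ i, wV.w (v i))

/-- A polynomial map `V → W`, recorded through the symmetric multilinear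
polarizations of its homogeneous components. -/
structure PolyMap (V W : Type*) [AddCommGroup V] [Module ℝ V]
    [AddCommGroup W] [Module ℝ W] where
  deg : ℕ
  comp : ∀ k : ℕ, MultilinearMap ℝ (fun _ : Fin k => V) W
  symm : ∀ (k : ℕ) (σ : Equiv.Perm (Fin k)) (v : Fin k → V),
    comp k (v ∘ σ) = comp k v
  zero_of_gt : ∀ k : ℕ, deg < k → comp k = 0

/-- Evaluation of a polynomial map. -/
noncomputable def PolyMap.eval {V W : Type*} [AddCommGroup V] [Module ℝ V]
    [AddCommGroup W] [Module ℝ W] (p : PolyMap V W) (x : V) : W :=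
  ∑ k ∈ Finset.range (p.deg + 1), p.comp k (fun _ => x)

/-- The weight of a polynomial map: the maximum of the weights of the
polarizations of its homogeneous components. -/
noncomputable def pweight {V W : Type*} [AddCommGroup V] [Module ℝ V]
    [AddCommGroup W] [Module ℝ W] (wV : Weight V) (wW : Weight W)
    (p : PolyMap V W) : EReal :=
  ⨆ k : ℕ, mwt wV wW (p.comp k)

/-- `φ : V → V` is an invertible subresonant polynomial map: it is given by a
subresonant polynomial whose derivative at `0` is invertible. -/
def IsSR {V : Type*} [AddCommGroup V] [Module ℝ V] (wV : Weight V)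
    (φ : V → V) : Prop :=
  ∃ p : PolyMap V V, (∀ x, φ x = p.eval x) ∧ pweight wV wV p ≤ 0 ∧
    Function.Bijective (fun v : V => p.comp 1 (fun _ => v))

/-- `φ : V → V` is an invertible strictly subresonant map: `φ = id + f` with
`f` strictly subresonant (`ϖ(f) < 0`). -/
def IsSSR {V : Type*} [AddCommGroup V] [Module ℝ V] (wV : Weight V)
    (φ : V → V) : Prop :=
  ∃ p : PolyMap V V, (∀ x, φ x = x + p.eval x) ∧ pweight wV wV p < 0

section basics
variable {V W : Type*} [AddCommGroup V] [Module ℝ V] [AddCommGroup W] [Module ℝ W]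
  (wV : Weight V) (wW : Weight W)

lemma Weight.w_zero (wV : Weight V) : wV.w 0 = ⊥ := (wV.eq_bot_iff 0).2 rfl

lemma Weight.w_neg (wV : Weight V) (v : V) : wV.w (-v) = wV.w v := by
  have := wV.smul_eq (-1) (by norm_num) v
  simpa using this

lemma Weight.w_sub_le (wV : Weight V) (v u : V) :
    wV.w (v - u) ≤ max (wV.w v) (wV.w u) := by
  rw [sub_eq_add_neg]
  simpa [wV.w_neg u] using wV.add_le v (-u)

/-- sum of weights of nonzero vectors is a real number -/
lemma sum_w_ne_bot {k : ℕ} (v : Fin k → V) (hv : ∀ i, v i ≠ 0) :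
    ∃ s : ℝ, (∑ i, wV.w (v i)) = (s : EReal) := by
  classical
  have h1 : ∀ i : Fin k, wV.w (v i) = ((wV.w (v i)).toReal : EReal) := by
    intro i
    exact (EReal.coe_toReal (wV.ne_top _) (fun h => hv i ((wV.eq_bot_iff _).1 h))).symm
  refine ⟨∑ i, (wV.w (v i)).toReal, ?_⟩
  rw [show ((∑ i, (wV.w (v i)).toReal : ℝ) : EReal) = ∑ i, ((wV.w (v i)).toReal : EReal) from
    map_sum (⟨⟨(Real.toEReal), EReal.coe_zero⟩, EReal.coe_add⟩ : ℝ →+ EReal) _ _]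
  exact Finset.sum_congr rfl fun i _ => h1 i

lemma le_mwt {k : ℕ} (T : MultilinearMap ℝ (fun _ : Fin k => V) W)
    (v : Fin k → V) (hv : ∀ i, v i ≠ 0) :
    wW.w (T v) - ∑ i, wV.w (v i) ≤ mwt wV wW T := by
  refine le_trans ?_ (le_iSup _ v)
  exact le_iSup_of_le hv le_rfl

/-- Key unconditional estimate. -/
lemma w_apply_le {k : ℕ} (T : MultilinearMap ℝ (fun _ : Fin k => V) W)
    (v : Fin k → V) :
    wW.w (T v) ≤ mwt wV wW T + ∑ i, wV.w (v i) := by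
  classical
  by_cases hv : ∀ i, v i ≠ 0
  · obtain ⟨s, hs⟩ := sum_w_ne_bot wV v hv
    have h := le_mwt wV wW T v hv
    rw [hs] at h ⊢
    exact (EReal.sub_le_iff_le_add (Or.inl (EReal.coe_ne_bot s))
      (Or.inl (EReal.coe_ne_top s))).1 h
  · push_neg at hv
    obtain ⟨i, hi⟩ := hv
    have hT : T v = 0 := T.map_coord_zero i hi
    have hsum : (∑ j, wV.w (v j)) = ⊥ := by
      classical
      have : wV.w (v i) = ⊥ := (wV.eq_bot_iff _).2 hi
      calc (∑ j, wV.w (v j)) = wV.w (v i) + ∑ j ∈ Finset.univ.erase i, wV.w (v j) :=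
            (Finset.add_sum_erase _ _ (Finset.mem_univ i)).symm
        _ = ⊥ := by rw [this]; exact EReal.add_eq_bot_iff.2 (Or.inl rfl)
    rw [hT, wW.w_zero, hsum]
    simp

lemma mwt_le {k : ℕ} (T : MultilinearMap ℝ (fun _ : Fin k => V) W) (c : EReal)
    (h : ∀ v : Fin k → V, (∀ i, v i ≠ 0) → wW.w (T v) ≤ c + ∑ i, wV.w (v i)) :
    mwt wV wW T ≤ c := by
  refine iSup_le fun v => iSup_le fun hv => ?_
  exact EReal.sub_le_of_le_add' (by rw [add_comm]; exact h v hv)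

lemma mwt_zero (k : ℕ) : mwt wV wW (0 : MultilinearMap ℝ (fun _ : Fin k => V) W) = ⊥ := by
  refine le_bot_iff.1 ?_
  refine iSup_le fun v => iSup_le fun hv => ?_
  simp [wW.w_zero, EReal.bot_sub]

end basics

section mwtops
variable {V : Type*} [AddCommGroup V] [Module ℝ V] (wV : Weight V)

lemma mwt_add_le {k : ℕ} (T S : MultilinearMap ℝ (fun _ : Fin k => V) V) :
    mwt wV wV (T + S) ≤ max (mwt wV wV T) (mwt wV wV S) := by
  refine mwt_le wV wV _ _ fun v hv => ?_
  have h1 := w_apply_le wV wV T v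
  have h2 := w_apply_le wV wV S v
  calc wV.w (T v + S v) ≤ max (wV.w (T v)) (wV.w (S v)) := wV.add_le _ _
    _ ≤ max (mwt wV wV T) (mwt wV wV S) + ∑ i, wV.w (v i) := by
        rw [max_le_iff]
        constructor
        · exact h1.trans (add_le_add_left (le_max_left _ _) _)
        · exact h2.trans (add_le_add_left (le_max_right _ _) _)

lemma mwt_smul_le {k : ℕ} (T : MultilinearMap ℝ (fun _ : Fin k => V) V) (c : ℝ) :
    mwt wV wV (c • T) ≤ mwt wV wV T := by
  refine mwt_le wV wV _ _ fun v hv => ?_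
  have : (c • T) v = c • (T v) := rfl
  rw [this]
  by_cases hc : c = 0
  · simp [hc, wV.w_zero]
  · rw [wV.smul_eq c hc]
    exact w_apply_le wV wV T v

lemma mwt_neg_le {k : ℕ} (T : MultilinearMap ℝ (fun _ : Fin k => V) V) :
    mwt wV wV (-T) ≤ mwt wV wV T := by
  have : -T = (-1 : ℝ) • T := by ext v; simp
  rw [this]; exact mwt_smul_le wV T (-1)

lemma mwt_sum_le {k : ℕ} {ι : Type*} (s : Finset ι)
    (T : ι → MultilinearMap ℝ (fun _ : Fin k => V) V) (c : EReal)
    (h : ∀ i ∈ s, mwt wV wV (T i) ≤ c) :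
    mwt wV wV (∑ i ∈ s, T i) ≤ c := by
  classical
  induction s using Finset.induction with
  | empty => simp [mwt_zero]
  | @insert a s hx ih =>
    rw [Finset.sum_insert hx]
    refine (mwt_add_le wV _ _).trans ?_
    rw [max_le_iff]
    exact ⟨h a (Finset.mem_insert_self a s), ih fun i hi => h i (Finset.mem_insert_of_mem hi)⟩

lemma mwt_domDomCongr_le {k l : ℕ} (e : Fin k ≃ Fin l)
    (T : MultilinearMap ℝ (fun _ : Fin k => V) V) :
    mwt wV wV (T.domDomCongr e) ≤ mwt wV wV T := by
  refine mwt_le wV wV _ _ fun v hv => ?_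
  have h1 : (T.domDomCongr e) v = T (fun i => v (e i)) := rfl
  have h2 : (∑ i, wV.w (v i)) = ∑ i, wV.w (v (e i)) := (Equiv.sum_comp e (fun j => wV.w (v j))).symm
  rw [h1, h2]
  exact w_apply_le wV wV T _

lemma mwt_compLinear_le {k : ℕ} (L : V →ₗ[ℝ] V) (hL : ∀ x, wV.w (L x) ≤ wV.w x)
    (T : MultilinearMap ℝ (fun _ : Fin k => V) V) :
    mwt wV wV (L.compMultilinearMap T) ≤ mwt wV wV T := by
  refine mwt_le wV wV _ _ fun v hv => ?_
  exact (hL (T v)).trans (w_apply_le wV wV T v)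

end mwtops

section blockcomp
variable {V : Type*} [AddCommGroup V] [Module ℝ V]

noncomputable def blockEquiv {m : ℕ} (η : Fin m → ℕ) :
    (Σ i : Fin m, Fin (η i)) ≃ Fin (∑ i, η i) :=
  Fintype.equivFinOfCardEq (by simp)

lemma blockComp_update {m : ℕ} (η : Fin m → ℕ)
    (S : ∀ i : Fin m, MultilinearMap ℝ (fun _ : Fin (η i) => V) V)
    (v : Fin (∑ i, η i) → V) (a : Fin (∑ i, η i)) (x : V) :
    (fun i => S i fun j => (Function.update v a x) (blockEquiv η ⟨i, j⟩)) =
      Function.update (fun i => S i fun j => v (blockEquiv η ⟨i, j⟩))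
        ((blockEquiv η).symm a).1
        (S ((blockEquiv η).symm a).1
          (Function.update (fun j => v (blockEquiv η ⟨((blockEquiv η).symm a).1, j⟩))
            ((blockEquiv η).symm a).2 x)) := by
  classical
  set e := blockEquiv η
  funext i
  by_cases hi : i = (e.symm a).1
  · subst hi
    rw [Function.update_self]
    congr 1
    funext j
    by_cases hj : j = (e.symm a).2
    · subst hj
      have ha : e ⟨(e.symm a).1, (e.symm a).2⟩ = a := by
        rw [Sigma.eta]; exact e.apply_symm_apply a
      rw [ha, Function.update_self, Function.update_self]
    · have hne : e ⟨(e.symm a).1, j⟩ ≠ a := by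
        intro h
        have h2 : (⟨(e.symm a).1, j⟩ : Σ i, Fin (η i)) = e.symm a :=
          e.injective (by rw [h, e.apply_symm_apply])
        exact hj (eq_of_heq (Sigma.ext_iff.mp h2).2)
      rw [Function.update_of_ne hne, Function.update_of_ne hj]
  · rw [Function.update_of_ne hi]
    congr 1
    funext j
    have hne : e ⟨i, j⟩ ≠ a := by
      intro h
      apply hi
      have : (⟨i, j⟩ : Σ i, Fin (η i)) = e.symm a := by rw [← h, e.symm_apply_apply]
      exact congrArg Sigma.fst this
    rw [Function.update_of_ne hne]

noncomputable def blockComp {m : ℕ} (T : MultilinearMap ℝ (fun _ : Fin m => V) V)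
    (η : Fin m → ℕ) (S : ∀ i : Fin m, MultilinearMap ℝ (fun _ : Fin (η i) => V) V) :
    MultilinearMap ℝ (fun _ : Fin (∑ i, η i) => V) V where
  toFun v := T fun i => S i fun j => v (blockEquiv η ⟨i, j⟩)
  map_update_add' := by
    intro dec v a x y
    obtain rfl : dec = instDecidableEqFin _ := Subsingleton.elim _ _
    rw [blockComp_update, blockComp_update, blockComp_update,
      (S _).map_update_add, (T).map_update_add]
  map_update_smul' := by
    intro dec v a c x
    obtain rfl : dec = instDecidableEqFin _ := Subsingleton.elim _ _
    rw [blockComp_update, blockComp_update, (S _).map_update_smul, (T).map_update_smul]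

lemma blockComp_apply {m : ℕ} (T : MultilinearMap ℝ (fun _ : Fin m => V) V)
    (η : Fin m → ℕ) (S : ∀ i : Fin m, MultilinearMap ℝ (fun _ : Fin (η i) => V) V)
    (v : Fin (∑ i, η i) → V) :
    blockComp T η S v = T fun i => S i fun j => v (blockEquiv η ⟨i, j⟩) := rfl

lemma blockComp_diag {m : ℕ} (T : MultilinearMap ℝ (fun _ : Fin m => V) V)
    (η : Fin m → ℕ) (S : ∀ i : Fin m, MultilinearMap ℝ (fun _ : Fin (η i) => V) V)
    (x : V) :
    blockComp T η S (fun _ => x) = T fun i => S i fun _ => x := rfl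

lemma blockComp_zero_left {m : ℕ} (η : Fin m → ℕ)
    (S : ∀ i : Fin m, MultilinearMap ℝ (fun _ : Fin (η i) => V) V) :
    blockComp (0 : MultilinearMap ℝ (fun _ : Fin m => V) V) η S = 0 := by
  ext v; rfl

lemma blockComp_zero_of {m : ℕ} (T : MultilinearMap ℝ (fun _ : Fin m => V) V)
    (η : Fin m → ℕ) (S : ∀ i : Fin m, MultilinearMap ℝ (fun _ : Fin (η i) => V) V)
    (i : Fin m) (hi : S i = 0) :
    blockComp T η S = 0 := by
  ext v
  show T (fun i' => S i' fun j => v (blockEquiv η ⟨i', j⟩)) = 0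
  refine T.map_coord_zero i ?_
  show S i (fun j => v (blockEquiv η ⟨i, j⟩)) = 0
  rw [hi]; rfl

lemma mwt_blockComp {wV : Weight V} {m : ℕ}
    (T : MultilinearMap ℝ (fun _ : Fin m => V) V)
    (η : Fin m → ℕ) (S : ∀ i : Fin m, MultilinearMap ℝ (fun _ : Fin (η i) => V) V) :
    mwt wV wV (blockComp T η S) ≤ mwt wV wV T + ∑ i, mwt wV wV (S i) := by
  refine mwt_le wV wV _ _ fun v hv => ?_
  rw [blockComp_apply]
  set e := blockEquiv η
  set u : Fin m → V := fun i => S i fun j => v (e ⟨i, j⟩) with hu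
  calc wV.w (T u) ≤ mwt wV wV T + ∑ i, wV.w (u i) := w_apply_le wV wV T u
    _ ≤ mwt wV wV T + ∑ i, (mwt wV wV (S i) + ∑ j, wV.w (v (e ⟨i, j⟩))) := by
        refine add_le_add_right (Finset.sum_le_sum fun i _ => ?_) _
        exact w_apply_le wV wV (S i) _
    _ = mwt wV wV T + (∑ i, mwt wV wV (S i) + ∑ i, ∑ j, wV.w (v (e ⟨i, j⟩))) := by
        rw [Finset.sum_add_distrib]
    _ = (mwt wV wV T + ∑ i, mwt wV wV (S i)) + ∑ a, wV.w (v a) := by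
        rw [add_assoc]
        congr 1
        congr 1
        have h1 : ∑ i, ∑ j, wV.w (v (e ⟨i, j⟩)) =
            ∑ p : Σ i : Fin m, Fin (η i), wV.w (v (e p)) := by
          rw [← Finset.univ_sigma_univ, Finset.sum_sigma]
        rw [h1]
        exact Equiv.sum_comp e (fun a => wV.w (v a))

end blockcomp

section polymapinfra
variable {V : Type*} [AddCommGroup V] [Module ℝ V]

lemma mwt_le_pweight (wV : Weight V) (p : PolyMap V V) (k : ℕ) :
    mwt wV wV (p.comp k) ≤ pweight wV wV p := by
  exact le_iSup (fun k => mwt wV wV (p.comp k)) k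

lemma pweight_le (wV : Weight V) (p : PolyMap V V) (c : EReal)
    (h : ∀ k, mwt wV wV (p.comp k) ≤ c) : pweight wV wV p ≤ c := by
  exact iSup_le h

noncomputable def symmetrize {k : ℕ} (T : MultilinearMap ℝ (fun _ : Fin k => V) V) :
    MultilinearMap ℝ (fun _ : Fin k => V) V :=
  ((Nat.factorial k : ℝ)⁻¹) • ∑ σ : Equiv.Perm (Fin k), T.domDomCongr σ

lemma symmetrize_apply {k : ℕ} (T : MultilinearMap ℝ (fun _ : Fin k => V) V)
    (v : Fin k → V) :
    symmetrize T v = ((Nat.factorial k : ℝ)⁻¹) • ∑ σ : Equiv.Perm (Fin k), T (v ∘ σ) := by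
  rw [symmetrize, MultilinearMap.smul_apply, MultilinearMap.sum_apply]
  rfl

lemma symmetrize_symm {k : ℕ} (T : MultilinearMap ℝ (fun _ : Fin k => V) V)
    (σ : Equiv.Perm (Fin k)) (v : Fin k → V) :
    symmetrize T (v ∘ σ) = symmetrize T v := by
  rw [symmetrize_apply, symmetrize_apply]
  congr 1
  calc (∑ τ : Equiv.Perm (Fin k), T ((v ∘ σ) ∘ τ))
      = ∑ τ : Equiv.Perm (Fin k), T (v ∘ (Equiv.mulLeft σ τ : Equiv.Perm (Fin k)))  :=
        Finset.sum_congr rfl fun τ _ => rfl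
    _ = ∑ τ : Equiv.Perm (Fin k), T (v ∘ τ) :=
        Equiv.sum_comp (Equiv.mulLeft σ) (fun τ : Equiv.Perm (Fin k) => T (v ∘ τ))

lemma symmetrize_diag {k : ℕ} (T : MultilinearMap ℝ (fun _ : Fin k => V) V) (x : V) :
    symmetrize T (fun _ => x) = T (fun _ => x) := by
  rw [symmetrize_apply]
  have h1 : (∑ σ : Equiv.Perm (Fin k), T ((fun _ : Fin k => x) ∘ σ)) =
      ∑ _σ : Equiv.Perm (Fin k), T (fun _ => x) := rfl
  rw [h1]
  rw [Finset.sum_const, Finset.card_univ, Fintype.card_perm, Fintype.card_fin]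
  rw [← Nat.cast_smul_eq_nsmul ℝ, smul_smul,
    inv_mul_cancel₀ (by exact_mod_cast Nat.factorial_ne_zero k), one_smul]

lemma symmetrize_zero {k : ℕ} :
    symmetrize (0 : MultilinearMap ℝ (fun _ : Fin k => V) V) = 0 := by
  ext v
  rw [symmetrize_apply]
  simp

lemma mwt_symmetrize_le (wV : Weight V) {k : ℕ}
    (T : MultilinearMap ℝ (fun _ : Fin k => V) V) :
    mwt wV wV (symmetrize T) ≤ mwt wV wV T := by
  refine (mwt_smul_le wV _ _).trans ?_
  exact mwt_sum_le wV _ _ _ fun σ _ => mwt_domDomCongr_le wV σ T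

noncomputable def PolyMap.mk' (d : ℕ)
    (T : ∀ k : ℕ, MultilinearMap ℝ (fun _ : Fin k => V) V)
    (h0 : ∀ k, d < k → T k = 0) : PolyMap V V where
  deg := d
  comp k := symmetrize (T k)
  symm k σ v := symmetrize_symm (T k) σ v
  zero_of_gt k hk :=
    show symmetrize (T k) = 0 by rw [h0 k hk]; exact symmetrize_zero

lemma PolyMap.mk'_eval (d : ℕ) (T : ∀ k : ℕ, MultilinearMap ℝ (fun _ : Fin k => V) V)
    (h0 : ∀ k, d < k → T k = 0) (x : V) :
    (PolyMap.mk' d T h0).eval x = ∑ k ∈ Finset.range (d + 1), T k (fun _ => x) := by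
  show (∑ k ∈ Finset.range (d + 1), symmetrize (T k) (fun _ => x)) = _
  exact Finset.sum_congr rfl fun k _ => symmetrize_diag (T k) x

lemma PolyMap.mk'_pweight (wV : Weight V) (d : ℕ)
    (T : ∀ k : ℕ, MultilinearMap ℝ (fun _ : Fin k => V) V)
    (h0 : ∀ k, d < k → T k = 0) (c : EReal) (h : ∀ k, mwt wV wV (T k) ≤ c) :
    pweight wV wV (PolyMap.mk' d T h0) ≤ c :=
  pweight_le wV _ c fun k => (mwt_symmetrize_le wV (T k)).trans (h k)

lemma PolyMap.mk'_comp_zero (d : ℕ)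
    (T : ∀ k : ℕ, MultilinearMap ℝ (fun _ : Fin k => V) V)
    (h0 : ∀ k, d < k → T k = 0) (k : ℕ) (h : T k = 0) :
    (PolyMap.mk' d T h0).comp k = 0 := by
  have : symmetrize (T k) = 0 := by rw [h]; exact symmetrize_zero
  exact this

lemma PolyMap.eval_ext (p : PolyMap V V) (d : ℕ) (h : p.deg ≤ d) (x : V) :
    p.eval x = ∑ k ∈ Finset.range (d + 1), p.comp k (fun _ => x) := by
  refine Finset.sum_subset (Finset.range_subset_range.2 (by omega)) fun k hk hk' => ?_
  rw [p.zero_of_gt k (by simp [Finset.mem_range] at hk'; omega)]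
  rfl

end polymapinfra

section basicpolys
variable {V : Type*} [AddCommGroup V] [Module ℝ V]

/-- the constant polynomial map -/
noncomputable def constPoly (c : V) : PolyMap V V :=
  PolyMap.mk' 0 (fun k => match k with
    | 0 => MultilinearMap.constOfIsEmpty ℝ _ c
    | (_ + 1) => 0) (fun k hk => by
      match k with
      | (n + 1) => rfl)

lemma constPoly_eval (c : V) (x : V) : (constPoly c).eval x = c := by
  rw [constPoly, PolyMap.mk'_eval]
  simp

lemma constPoly_pweight (wV : Weight V) (c : V) :
    pweight wV wV (constPoly c) ≤ wV.w c := by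
  refine PolyMap.mk'_pweight wV _ _ _ _ fun k => ?_
  match k with
  | 0 =>
    refine mwt_le wV wV _ _ fun v hv => ?_
    have h1 : (∑ i : Fin 0, wV.w (v i)) = 0 := rfl
    rw [h1, add_zero]
    exact le_refl _
  | (n + 1) => simp [mwt_zero]

/-- polynomial map from a linear map -/
noncomputable def linPoly (L : V →ₗ[ℝ] V) : PolyMap V V :=
  PolyMap.mk' 1 (fun k => match k with
    | 1 => MultilinearMap.ofSubsingleton ℝ V V 0 L
    | 0 => 0
    | (_ + 2) => 0) (fun k hk => by
      match k, hk with
      | (n + 2), _ => rfl)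

lemma linPoly_eval (L : V →ₗ[ℝ] V) (x : V) : (linPoly L).eval x = L x := by
  rw [linPoly, PolyMap.mk'_eval]
  rw [Finset.sum_range_succ, Finset.sum_range_one]
  simp

lemma linPoly_pweight (wV : Weight V) (L : V →ₗ[ℝ] V)
    (hL : ∀ x, wV.w (L x) ≤ wV.w x) :
    pweight wV wV (linPoly L) ≤ 0 := by
  refine PolyMap.mk'_pweight wV _ _ _ _ fun k => ?_
  match k with
  | 0 => simp [mwt_zero]
  | 1 =>
    refine mwt_le wV wV _ _ fun v hv => ?_
    have h1 : (MultilinearMap.ofSubsingleton ℝ V V 0 L) v = L (v 0) := rfl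
    rw [h1, Fin.sum_univ_one, zero_add]
    exact hL (v 0)
  | (n + 2) => simp [mwt_zero]

lemma linPoly_comp_one (L : V →ₗ[ℝ] V) (x : V) :
    (linPoly L).comp 1 (fun _ => x) = L x := by
  have : (linPoly L).comp 1 (fun _ => x) =
      symmetrize (MultilinearMap.ofSubsingleton ℝ V V 0 L) (fun _ => x) := rfl
  rw [this, symmetrize_diag]
  rfl

/-- finite sums of polynomial maps -/
lemma sumPoly {ι : Type*} (s : Finset ι) (P : ι → PolyMap V V) (wV : Weight V) :
    ∃ p : PolyMap V V, (∀ x, p.eval x = ∑ i ∈ s, (P i).eval x) ∧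
      (∀ c : EReal, (∀ i ∈ s, pweight wV wV (P i) ≤ c) → pweight wV wV p ≤ c) ∧
      (∀ k, (∀ i ∈ s, (P i).comp k = 0) → p.comp k = 0) := by
  classical
  set d := s.sup (fun i => (P i).deg) with hd
  have h0 : ∀ k, d < k → (∑ i ∈ s, (P i).comp k) = 0 := by
    intro k hk
    refine Finset.sum_eq_zero fun i hi => ?_
    exact (P i).zero_of_gt k (lt_of_le_of_lt (hd ▸ Finset.le_sup (f := fun i => (P i).deg) hi) hk)
  refine ⟨PolyMap.mk' d (fun k => ∑ i ∈ s, (P i).comp k) h0, ?_, ?_, ?_⟩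
  · intro x
    rw [PolyMap.mk'_eval]
    rw [show (∑ k ∈ Finset.range (d+1), (∑ i ∈ s, (P i).comp k) (fun _ => x)) =
        ∑ k ∈ Finset.range (d+1), ∑ i ∈ s, (P i).comp k (fun _ => x) from
      Finset.sum_congr rfl fun k _ => MultilinearMap.sum_apply _ _ _]
    rw [Finset.sum_comm]
    refine Finset.sum_congr rfl fun i hi => ?_
    exact ((P i).eval_ext d (hd ▸ Finset.le_sup (f := fun i => (P i).deg) hi) x).symm
  · intro c hc
    refine PolyMap.mk'_pweight wV _ _ _ _ fun k => ?_
    exact mwt_sum_le wV s _ c fun i hi => (mwt_le_pweight wV (P i) k).trans (hc i hi)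
  · intro k hk
    refine PolyMap.mk'_comp_zero _ _ _ _ ?_
    exact Finset.sum_eq_zero hk

end basicpolys

section substsec
variable {V : Type*} [AddCommGroup V] [Module ℝ V]

lemma negPoly (P : PolyMap V V) (wV : Weight V) :
    ∃ p : PolyMap V V, (∀ x, p.eval x = -(P.eval x)) ∧
      pweight wV wV p ≤ pweight wV wV P ∧
      (∀ k, P.comp k = 0 → p.comp k = 0) := by
  have h0 : ∀ k, P.deg < k → -(P.comp k) = 0 := by
    intro k hk; rw [P.zero_of_gt k hk]; simp
  refine ⟨PolyMap.mk' P.deg (fun k => -(P.comp k)) h0, ?_, ?_, ?_⟩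
  · intro x
    rw [PolyMap.mk'_eval, PolyMap.eval]
    rw [show (∑ k ∈ Finset.range (P.deg + 1), (-(P.comp k)) fun _ => x) =
        ∑ k ∈ Finset.range (P.deg + 1), -((P.comp k) fun _ => x) from
      Finset.sum_congr rfl fun k _ => rfl]
    exact Finset.sum_neg_distrib _
  · refine PolyMap.mk'_pweight wV _ _ _ _ fun k => ?_
    exact (mwt_neg_le wV (P.comp k)).trans (mwt_le_pweight wV P k)
  · intro k hk
    refine PolyMap.mk'_comp_zero _ _ _ _ ?_
    rw [hk]; simp

/-- The master substitution lemma: substituting polynomial maps into a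
multilinear map yields a polynomial map. -/
lemma subst (wV : Weight V) {m : ℕ} (T : MultilinearMap ℝ (fun _ : Fin m => V) V)
    (q : Fin m → PolyMap V V) :
    ∃ p : PolyMap V V,
      (∀ x, p.eval x = T fun i => (q i).eval x) ∧
      pweight wV wV p ≤ mwt wV wV T + ∑ i, pweight wV wV (q i) ∧
      (∀ k, (T = 0 ∨ ∀ η : Fin m → ℕ, (∀ i, η i ≤ (q i).deg) → (∑ i, η i) = k →
          ∃ i, (q i).comp (η i) = 0) → p.comp k = 0) := by
  classical
  set d := ∑ i, (q i).deg with hdd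
  set A : Fin m → Finset ℕ := fun i => Finset.range ((q i).deg + 1) with hA
  set B : (Fin m → ℕ) → ∀ k, MultilinearMap ℝ (fun _ : Fin k => V) V :=
    fun η k => if h : (∑ i, η i) = k then
      (blockComp T η (fun i => (q i).comp (η i))).domDomCongr (finCongr h) else 0 with hB
  set T' : ∀ k, MultilinearMap ℝ (fun _ : Fin k => V) V :=
    fun k => ∑ η ∈ Fintype.piFinset A, B η k with hT'
  have hsum_le : ∀ η ∈ Fintype.piFinset A, (∑ i, η i) ≤ d := by
    intro η hη
    rw [Fintype.mem_piFinset] at hη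
    refine Finset.sum_le_sum fun i _ => ?_
    have := hη i
    rw [hA] at this
    simp only [Finset.mem_range] at this
    omega
  have h0 : ∀ k, d < k → T' k = 0 := by
    intro k hk
    refine Finset.sum_eq_zero fun η hη => ?_
    rw [hB]
    have : ¬((∑ i, η i) = k) := by
      have := hsum_le η hη; omega
    simp only [this, dif_neg, not_false_iff]
  refine ⟨PolyMap.mk' d T' h0, ?_, ?_, ?_⟩
  · intro x
    rw [PolyMap.mk'_eval]
    have hev : ∀ i, (q i).eval x = ∑ n ∈ A i, (q i).comp n (fun _ => x) := fun i => rfl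
    have hmsf : (T fun i => (q i).eval x) =
        ∑ η ∈ Fintype.piFinset A, T fun i => (q i).comp (η i) (fun _ => x) := by
      rw [show (T fun i => (q i).eval x) = T fun i => ∑ n ∈ A i, (q i).comp n (fun _ => x) from
        congrArg T (funext hev)]
      exact T.map_sum_finset _ _
    rw [hmsf]
    have hTk : ∀ k, T' k (fun _ => x) = ∑ η ∈ Fintype.piFinset A, B η k (fun _ => x) := by
      intro k
      rw [hT']
      exact MultilinearMap.sum_apply _ _ _
    rw [show (∑ k ∈ Finset.range (d+1), T' k (fun _ => x)) =
        ∑ k ∈ Finset.range (d+1), ∑ η ∈ Fintype.piFinset A, B η k (fun _ => x) from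
      Finset.sum_congr rfl fun k _ => hTk k]
    rw [Finset.sum_comm]
    refine Finset.sum_congr rfl fun η hη => ?_
    have hd1 : (∑ i, η i) ∈ Finset.range (d + 1) := by
      rw [Finset.mem_range]
      have := hsum_le η hη; omega
    rw [Finset.sum_eq_single_of_mem _ hd1]
    · simp only [hB]
      rw [dif_pos trivial]
      rfl
    · intro k _ hk
      simp only [hB]
      rw [dif_neg (Ne.symm hk)]
      rfl
  · refine PolyMap.mk'_pweight wV _ _ _ _ fun k => ?_
    refine mwt_sum_le wV _ _ _ fun η hη => ?_
    simp only [hB]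
    by_cases h : (∑ i, η i) = k
    · simp only [dif_pos h]
      refine (mwt_domDomCongr_le wV _ _).trans ?_
      refine (mwt_blockComp _ _ _).trans ?_
      refine add_le_add le_rfl ?_
      refine Finset.sum_le_sum fun i _ => ?_
      exact mwt_le_pweight wV (q i) (η i)
    · simp only [dif_neg h, mwt_zero]
      exact bot_le
  · intro k hk
    refine PolyMap.mk'_comp_zero _ _ _ _ ?_
    refine Finset.sum_eq_zero fun η hη => ?_
    simp only [hB]
    by_cases h : (∑ i, η i) = k
    · simp only [dif_pos h]
      rcases hk with hT | hq
      · rw [hT, blockComp_zero_left]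
        ext v; rfl
      · obtain ⟨i, hi⟩ := hq η (by
          intro i
          rw [Fintype.mem_piFinset] at hη
          have := hη i
          rw [hA] at this
          simp only [Finset.mem_range] at this
          omega) h
        rw [blockComp_zero_of T η _ i hi]
        ext v; rfl
    · simp only [dif_neg h]

end substsec

section compsec
variable {V : Type*} [AddCommGroup V] [Module ℝ V]

lemma addPoly (wV : Weight V) (P Q : PolyMap V V) :
    ∃ p : PolyMap V V, (∀ x, p.eval x = P.eval x + Q.eval x) ∧
      (∀ c : EReal, pweight wV wV P ≤ c → pweight wV wV Q ≤ c → pweight wV wV p ≤ c) ∧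
      (∀ k, P.comp k = 0 → Q.comp k = 0 → p.comp k = 0) ∧
      (∀ (k : ℕ) (x : V), p.comp k (fun _ => x) =
        P.comp k (fun _ => x) + Q.comp k (fun _ => x)) := by
  have h0 : ∀ k, max P.deg Q.deg < k → P.comp k + Q.comp k = 0 := by
    intro k hk
    rw [P.zero_of_gt k (by omega), Q.zero_of_gt k (by omega), add_zero]
  refine ⟨PolyMap.mk' (max P.deg Q.deg) (fun k => P.comp k + Q.comp k) h0, ?_, ?_, ?_, ?_⟩
  · intro x
    rw [PolyMap.mk'_eval]
    rw [show (∑ k ∈ Finset.range (max P.deg Q.deg + 1), (P.comp k + Q.comp k) fun _ => x) =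
        ∑ k ∈ Finset.range (max P.deg Q.deg + 1),
          (P.comp k (fun _ => x) + Q.comp k (fun _ => x)) from
      Finset.sum_congr rfl fun k _ => rfl]
    rw [Finset.sum_add_distrib]
    rw [P.eval_ext (max P.deg Q.deg) (le_max_left _ _) x,
      Q.eval_ext (max P.deg Q.deg) (le_max_right _ _) x]
  · intro c h1 h2
    refine PolyMap.mk'_pweight wV _ _ _ _ fun k => ?_
    refine (mwt_add_le wV _ _).trans (max_le ?_ ?_)
    · exact (mwt_le_pweight wV P k).trans h1
    · exact (mwt_le_pweight wV Q k).trans h2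
  · intro k h1 h2
    refine PolyMap.mk'_comp_zero _ _ _ _ ?_
    rw [h1, h2, add_zero]
  · intro k x
    have hd : (PolyMap.mk' (max P.deg Q.deg) (fun k => P.comp k + Q.comp k) h0).comp k
        (fun _ => x) = (P.comp k + Q.comp k) (fun _ => x) := symmetrize_diag _ x
    rw [hd]
    rfl

lemma compPoly (wV : Weight V) (P Q : PolyMap V V) (hQ : pweight wV wV Q ≤ 0) :
    ∃ p : PolyMap V V, (∀ x, p.eval x = P.eval (Q.eval x)) ∧
      pweight wV wV p ≤ pweight wV wV P ∧
      (P.comp 0 = 0 → P.comp 1 = 0 → Q.comp 0 = 0 → ∀ k, k ≤ 1 → p.comp k = 0) ∧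
      (P.comp 0 = 0 → Q.comp 0 = 0 → p.comp 0 = 0) := by
  classical
  have H : ∀ m : ℕ, ∃ pm : PolyMap V V,
      (∀ x, pm.eval x = P.comp m fun _ => Q.eval x) ∧
      pweight wV wV pm ≤ mwt wV wV (P.comp m) + ∑ _i : Fin m, pweight wV wV Q ∧
      (∀ k, (P.comp m = 0 ∨ ∀ η : Fin m → ℕ, (∀ i, η i ≤ Q.deg) → (∑ i, η i) = k →
          ∃ i, Q.comp (η i) = 0) → pm.comp k = 0) := by
    intro m
    obtain ⟨pm, h1, h2, h3⟩ := subst wV (P.comp m) (fun _ : Fin m => Q)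
    exact ⟨pm, h1, h2, h3⟩
  choose pm hpmeval hpmw hpmz using H
  obtain ⟨p, hpe, hpw, hpz⟩ := sumPoly (Finset.range (P.deg + 1)) pm wV
  have hbound : ∀ m, pweight wV wV (pm m) ≤ pweight wV wV P := by
    intro m
    refine (hpmw m).trans ?_
    have hs : (∑ _i : Fin m, pweight wV wV Q) ≤ 0 := by
      refine Finset.sum_nonpos fun i _ => hQ
    calc mwt wV wV (P.comp m) + ∑ _i : Fin m, pweight wV wV Q
        ≤ mwt wV wV (P.comp m) + 0 := add_le_add le_rfl hs
      _ = mwt wV wV (P.comp m) := add_zero _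
      _ ≤ pweight wV wV P := mwt_le_pweight wV P m
  refine ⟨p, ?_, ?_, ?_, ?_⟩
  · intro x
    rw [hpe x, PolyMap.eval]
    exact Finset.sum_congr rfl fun m _ => hpmeval m x
  · exact hpw _ fun m _ => hbound m
  · intro hP0 hP1 hQ0 k hk
    refine hpz k fun m _ => ?_
    refine hpmz m k ?_
    match m with
    | 0 => exact Or.inl hP0
    | 1 => exact Or.inl hP1
    | (n + 2) =>
      refine Or.inr fun η _ hsum => ?_
      by_contra hcon
      push_neg at hcon
      have hpos : ∀ i, 1 ≤ η i := by
        intro i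
        by_contra hi
        push_neg at hi
        interval_cases h : η i
        · exact hcon i (by rw [h]  at *; exact hQ0)
      have : (n + 2 : ℕ) ≤ ∑ i, η i := by
        calc (n + 2 : ℕ) = ∑ _i : Fin (n + 2), 1 := by simp
          _ ≤ ∑ i, η i := Finset.sum_le_sum fun i _ => hpos i
      omega
  · intro hP0 hQ0
    refine hpz 0 fun m _ => ?_
    refine hpmz m 0 ?_
    match m with
    | 0 => exact Or.inl hP0
    | (n + 1) =>
      refine Or.inr fun η _ hsum => ?_
      have : η 0 = 0 := by
        have h1 : η 0 ≤ ∑ i, η i := Finset.single_le_sum (fun i _ => Nat.zero_le _) (Finset.mem_univ 0)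
        omega
      exact ⟨0, by rw [this]; exact hQ0⟩

end compsec

section telescopesec
variable {V : Type*} [AddCommGroup V] [Module ℝ V]

lemma multi_telescope {m : ℕ} (T : MultilinearMap ℝ (fun _ : Fin m => V) V)
    (a dd : V) :
    T (fun _ => a + dd) = T (fun _ => a) +
      ∑ i ∈ Finset.range m,
        T (fun j : Fin m => if (j:ℕ) < i then a + dd else if (j:ℕ) = i then dd else a) := by
  classical
  set b := a + dd with hb
  set u : ℕ → (Fin m → V) := fun i (j : Fin m) => if (j : ℕ) < i then b else a with hu
  have hstep : ∀ i ∈ Finset.range m, T (u (i+1)) - T (u i) =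
      T (fun j : Fin m => if (j:ℕ) < i then b else if (j:ℕ) = i then dd else a) := by
    intro i hi
    rw [Finset.mem_range] at hi
    set j0 : Fin m := ⟨i, hi⟩ with hj0
    have h1 : u (i+1) = Function.update (u i) j0 b := by
      funext j
      rcases eq_or_ne j j0 with rfl | hj
      · rw [Function.update_self, hu]
        simp only [hj0]
        rw [if_pos (by omega)]
      · rw [Function.update_of_ne hj, hu]
        have hne : (j : ℕ) ≠ i := fun h => hj (Fin.ext (h.trans rfl))
        simp only
        by_cases h2 : (j:ℕ) < i
        · rw [if_pos (by omega), if_pos h2]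
        · rw [if_neg (by omega), if_neg h2]
    have h2 : Function.update (u i) j0 a = u i := by
      have h2' : u i j0 = a := by rw [hu]; simp only [hj0]; rw [if_neg (by omega)]
      rw [← h2', Function.update_eq_self]
    have h3 : Function.update (u i) j0 dd =
        (fun j : Fin m => if (j:ℕ) < i then b else if (j:ℕ) = i then dd else a) := by
      funext j
      rcases eq_or_ne j j0 with rfl | hj
      · rw [Function.update_self]
        simp only [hj0]
        rw [if_neg (by omega)]
        simp
      · rw [Function.update_of_ne hj, hu]
        have hne : (j : ℕ) ≠ i := fun h => hj (Fin.ext (h.trans rfl))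
        simp only
        by_cases h2' : (j:ℕ) < i
        · rw [if_pos h2', if_pos h2']
        · rw [if_neg h2', if_neg h2', if_neg hne]
    have h4 : T (u (i+1)) = T (u i) +
        T (fun j : Fin m => if (j:ℕ) < i then b else if (j:ℕ) = i then dd else a) := by
      rw [h1, hb, T.map_update_add, h2, h3]
    rw [h4]; abel
  have htel : ∑ i ∈ Finset.range m, (T (u (i+1)) - T (u i)) = T (u m) - T (u 0) :=
    Finset.sum_range_sub (fun i => T (u i)) m
  have hum : u m = fun _ => b := funext fun j => if_pos j.isLt
  have hu0 : u 0 = fun _ => a := funext fun j => if_neg (by omega)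
  have hfin : ∑ i ∈ Finset.range m,
      T (fun j : Fin m => if (j:ℕ) < i then b else if (j:ℕ) = i then dd else a)
      = T (fun _ => b) - T (fun _ => a) := by
    rw [← hum, ← hu0, ← htel]
    exact (Finset.sum_congr rfl hstep).symm
  rw [hfin]
  abel

lemma telescope (wV : Weight V) (F Pa Pb D : PolyMap V V)
    (hab : ∀ x, Pb.eval x = Pa.eval x + D.eval x)
    (ha : pweight wV wV Pa ≤ 0) (hb : pweight wV wV Pb ≤ 0) :
    ∃ E : PolyMap V V,
      (∀ x, F.eval (Pb.eval x) = F.eval (Pa.eval x) + E.eval x) ∧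
      pweight wV wV E ≤ pweight wV wV F + pweight wV wV D ∧
      (∀ vd : ℕ, F.comp 0 = 0 → F.comp 1 = 0 → Pa.comp 0 = 0 → Pb.comp 0 = 0 →
        (∀ j, j < vd → D.comp j = 0) → ∀ k, k ≤ vd → E.comp k = 0) := by
  classical
  set s : Finset (Σ _ : ℕ, ℕ) :=
    (Finset.range (F.deg + 1)).sigma (fun m => Finset.range m) with hs
  set q : ∀ mi : Σ _ : ℕ, ℕ, Fin mi.1 → PolyMap V V :=
    fun mi (j : Fin mi.1) =>
      if (j:ℕ) < mi.2 then Pb else if (j:ℕ) = mi.2 then D else Pa with hq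
  have H : ∀ mi : Σ _ : ℕ, ℕ, ∃ pp : PolyMap V V,
      (∀ x, pp.eval x = F.comp mi.1 fun j => (q mi j).eval x) ∧
      pweight wV wV pp ≤ mwt wV wV (F.comp mi.1) + ∑ j, pweight wV wV (q mi j) ∧
      (∀ k, (F.comp mi.1 = 0 ∨ ∀ η : Fin mi.1 → ℕ, (∀ j, η j ≤ (q mi j).deg) →
          (∑ j, η j) = k → ∃ j, (q mi j).comp (η j) = 0) → pp.comp k = 0) :=
    fun mi => subst wV (F.comp mi.1) (q mi)
  choose pp hpeval hpw hpz using H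
  obtain ⟨E, hEe, hEw, hEz⟩ := sumPoly s pp wV
  have hqj0 : ∀ (m i : ℕ) (hm : i < m), q ⟨m, i⟩ ⟨i, hm⟩ = D := by
    intro m i hm
    rw [hq]
    simp only
    rw [if_neg (by omega)]
    simp
  refine ⟨E, ?_, ?_, ?_⟩
  · intro x
    have hEx : E.eval x = F.eval (Pb.eval x) - F.eval (Pa.eval x) := by
      rw [hEe x]
      rw [Finset.sum_congr rfl (fun mi _ => hpeval mi x), Finset.sum_sigma]
      have h3 : ∀ m ∈ Finset.range (F.deg + 1),
          (∑ i ∈ Finset.range m, F.comp m fun j => (q ⟨m, i⟩ j).eval x) =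
          F.comp m (fun _ => Pb.eval x) - F.comp m (fun _ => Pa.eval x) := by
        intro m _
        have h2 : ∀ i ∈ Finset.range m,
            (F.comp m fun j => (q ⟨m, i⟩ j).eval x) =
            F.comp m (fun j : Fin m => if (j:ℕ) < i then Pb.eval x
              else if (j:ℕ) = i then D.eval x else Pa.eval x) := by
          intro i _
          congr 1
          funext j
          rw [hq]
          simp only
          by_cases hlt : (j:ℕ) < i
          · rw [if_pos hlt, if_pos hlt]
          · rw [if_neg hlt, if_neg hlt]
            by_cases heq : (j:ℕ) = i
            · rw [if_pos heq, if_pos heq]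
            · rw [if_neg heq, if_neg heq]
        rw [Finset.sum_congr rfl h2]
        have hmt := multi_telescope (F.comp m) (Pa.eval x) (D.eval x)
        rw [← hab x] at hmt
        rw [hmt]
        abel
      rw [Finset.sum_congr rfl h3, Finset.sum_sub_distrib]
      rfl
    rw [hEx]
    abel
  · refine hEw _ fun mi hmi => ?_
    obtain ⟨m, i⟩ := mi
    rw [hs, Finset.mem_sigma, Finset.mem_range, Finset.mem_range] at hmi
    obtain ⟨hm1, hm2⟩ := hmi
    set j0 : Fin m := ⟨i, hm2⟩ with hj0
    have hqsum : (∑ j, pweight wV wV (q ⟨m, i⟩ j)) ≤ pweight wV wV D + 0 := by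
      have hbound : ∀ j : Fin m, pweight wV wV (q ⟨m, i⟩ j) ≤
          (if j = j0 then pweight wV wV D else 0) := by
        intro j
        by_cases hj : j = j0
        · rw [if_pos hj, hj]
          rw [hqj0 m i hm2]
        · rw [if_neg hj, hq]
          simp only
          by_cases hlt : (j:ℕ) < i
          · rw [if_pos hlt]; exact hb
          · rw [if_neg hlt, if_neg (fun h => hj (Fin.ext h))]; exact ha
      calc (∑ j, pweight wV wV (q ⟨m, i⟩ j))
          ≤ ∑ j, (if j = j0 then pweight wV wV D else 0) :=
            Finset.sum_le_sum fun j _ => hbound j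
        _ = pweight wV wV D := by
            rw [Finset.sum_ite_eq' Finset.univ j0 (fun _ => pweight wV wV D)]
            rw [if_pos (Finset.mem_univ j0)]
        _ ≤ pweight wV wV D + 0 := by rw [add_zero]
    refine (hpw ⟨m, i⟩).trans ?_
    rw [add_zero] at hqsum
    exact add_le_add (mwt_le_pweight wV F m) hqsum
  · intro vd hF0 hF1 ha0 hb0 hD k hk
    refine hEz k fun mi hmi => ?_
    obtain ⟨m, i⟩ := mi
    rw [hs, Finset.mem_sigma, Finset.mem_range, Finset.mem_range] at hmi
    obtain ⟨hm1, hm2⟩ := hmi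
    refine hpz ⟨m, i⟩ k ?_
    match m, hm2 with
    | 0, hm2 => exact Or.inl hF0
    | 1, hm2 => exact Or.inl hF1
    | (n+2), hm2 =>
      refine Or.inr fun η _ hηsum => ?_
      set j0 : Fin (n+2) := ⟨i, hm2⟩ with hj0
      by_cases hvd : η j0 < vd
      · refine ⟨j0, ?_⟩
        rw [show q ⟨n+2, i⟩ j0 = D from hqj0 (n+2) i hm2]
        exact hD _ hvd
      · have hle : η j0 ≤ ∑ j, η j :=
          Finset.single_le_sum (fun _ _ => Nat.zero_le _) (Finset.mem_univ j0)
        have hex : ∃ j1 : Fin (n+2), j1 ≠ j0 := by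
          rcases eq_or_ne j0 0 with h | h
          · exact ⟨1, by rw [h]; exact Fin.one_eq_zero_iff.not.2 (by omega)⟩
          · exact ⟨0, Ne.symm h⟩
        obtain ⟨j1, hj1⟩ := hex
        have hη1 : η j1 = 0 := by
          by_contra hne0
          have h6 : η j1 + η j0 ≤ ∑ j, η j := by
            have h7 := Finset.sum_le_sum_of_subset
              (Finset.subset_univ ({j1, j0} : Finset (Fin (n+2)))) (f := η)
            rwa [Finset.sum_pair hj1] at h7
          omega
        refine ⟨j1, ?_⟩
        rw [hη1, hq]
        simp only
        by_cases hlt : (j1:ℕ) < i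
        · rw [if_pos hlt]; exact hb0
        · rw [if_neg hlt, if_neg (fun h => hj1 (Fin.ext h))]; exact ha0

end telescopesec

section boundsec
variable {V : Type*} [AddCommGroup V] [Module ℝ V]

lemma weight_bounds (wV : Weight V) [FiniteDimensional ℝ V]
    (hneg : ∀ v : V, v ≠ 0 → wV.w v < 0) :
    ∃ A B : ℝ, A < 0 ∧ B ≤ A ∧
      ∀ v : V, v ≠ 0 → (B : EReal) ≤ wV.w v ∧ wV.w v ≤ (A : EReal) := by
  classical
  by_cases hS : ∃ v : V, v ≠ 0
  swap
  · push_neg at hS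
    exact ⟨-1, -1, by norm_num, le_refl _, fun v hv => absurd (hS v) hv⟩
  set S : Set EReal := {t | ∃ v : V, v ≠ 0 ∧ wV.w v = t} with hSdef
  have hMsub : ∀ t : EReal, ∃ M : Submodule ℝ V, ∀ v : V, v ∈ M ↔ wV.w v ≤ t := by
    intro t
    refine ⟨{ carrier := {v | wV.w v ≤ t}
              add_mem' := fun ha hb => le_trans (wV.add_le _ _) (max_le ha hb)
              zero_mem' := by
                show wV.w 0 ≤ t
                rw [wV.w_zero]; exact bot_le
              smul_mem' := by
                intro c v hv
                show wV.w (c • v) ≤ t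
                by_cases hc : c = 0
                · rw [hc, zero_smul, wV.w_zero]; exact bot_le
                · rw [wV.smul_eq c hc]; exact hv }, fun v => Iff.rfl⟩
  choose M hM using hMsub
  have hmono : ∀ t t' : EReal, t' ∈ S → t < t' → M t < M t' := by
    intro t t' ht' htt
    obtain ⟨v, hv0, hvw⟩ := ht'
    refine lt_of_le_of_ne ?_ ?_
    · intro u hu
      rw [hM] at hu ⊢
      exact hu.trans htt.le
    · intro heq
      have h1 : v ∈ M t' := (hM t' v).2 (le_of_eq hvw)
      rw [← heq, hM] at h1
      rw [hvw] at h1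
      exact absurd h1 (not_le.2 htt)
  have hinj : Set.InjOn (fun t => Module.finrank ℝ (M t)) S := by
    intro t ht t' ht' heq
    rcases lt_trichotomy t t' with h | h | h
    · exact absurd heq (ne_of_lt (Submodule.finrank_lt_finrank_of_lt (hmono t t' ht' h)))
    · exact h
    · exact absurd heq.symm (ne_of_lt (Submodule.finrank_lt_finrank_of_lt (hmono t' t ht h)))
  have himg : (fun t => Module.finrank ℝ (M t)) '' S ⊆ Set.Iic (Module.finrank ℝ V) :=
    fun n ⟨t, _, hn⟩ => hn ▸ Submodule.finrank_le (M t)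
  have hSfin : S.Finite :=
    Set.Finite.of_finite_image ((Set.finite_Iic _).subset himg) hinj
  obtain ⟨v0, hv00⟩ := hS
  have hSne : (wV.w v0) ∈ S := ⟨v0, hv00, rfl⟩
  set Sf := hSfin.toFinset with hSf
  have hSfne : Sf.Nonempty := ⟨wV.w v0, by rw [hSf, Set.Finite.mem_toFinset]; exact hSne⟩
  set tmax := Sf.max' hSfne with htmax
  set tmin := Sf.min' hSfne with htmin
  have hmem : ∀ t ∈ Sf, ∃ v : V, v ≠ 0 ∧ wV.w v = t := by
    intro t ht
    rw [hSf, Set.Finite.mem_toFinset] at ht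
    exact ht
  have hreal : ∀ t ∈ Sf, t ≠ ⊥ ∧ t ≠ ⊤ ∧ t < 0 := by
    intro t ht
    obtain ⟨v, hv0, hvw⟩ := hmem t ht
    exact ⟨hvw ▸ fun h => hv0 ((wV.eq_bot_iff v).1 h), hvw ▸ wV.ne_top v, hvw ▸ hneg v hv0⟩
  obtain ⟨hmaxb, hmaxt, hmaxneg⟩ := hreal tmax (Sf.max'_mem hSfne)
  obtain ⟨hminb, hmint, _⟩ := hreal tmin (Sf.min'_mem hSfne)
  refine ⟨tmax.toReal, tmin.toReal, ?_, ?_, ?_⟩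
  · have := EReal.coe_toReal hmaxt hmaxb
    rw [← EReal.coe_lt_coe_iff (y := 0)]
    rw [this]
    exact_mod_cast hmaxneg
  · rw [← EReal.coe_le_coe_iff, EReal.coe_toReal hmint hminb, EReal.coe_toReal hmaxt hmaxb]
    exact Sf.min'_le tmax (Sf.max'_mem hSfne)
  · intro v hv
    have hvS : wV.w v ∈ Sf := by rw [hSf, Set.Finite.mem_toFinset]; exact ⟨v, hv, rfl⟩
    constructor
    · rw [EReal.coe_toReal hmint hminb]
      exact Sf.min'_le _ hvS
    · rw [EReal.coe_toReal hmaxt hmaxb]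
      exact Sf.le_max' _ hvS

lemma mwt_lower (wV : Weight V) {A B : ℝ}
    (hbounds : ∀ v : V, v ≠ 0 → (B : EReal) ≤ wV.w v ∧ wV.w v ≤ (A : EReal))
    {k : ℕ} (T : MultilinearMap ℝ (fun _ : Fin k => V) V) (hT : T ≠ 0) :
    ((B - k * A : ℝ) : EReal) ≤ mwt wV wV T := by
  obtain ⟨v, hv⟩ : ∃ v, T v ≠ 0 := by
    by_contra h
    push_neg at h
    exact hT (MultilinearMap.ext fun v => by rw [h v]; rfl)
  have hvi : ∀ i, v i ≠ 0 := fun i hi => hv (T.map_coord_zero i hi)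
  obtain ⟨s, hs⟩ := sum_w_ne_bot wV v hvi
  have h1 : (s : EReal) ≤ ((k * A : ℝ) : EReal) := by
    rw [← hs]
    calc (∑ i, wV.w (v i)) ≤ ∑ _i : Fin k, (A : EReal) :=
          Finset.sum_le_sum fun i _ => (hbounds (v i) (hvi i)).2
      _ = ((k * A : ℝ) : EReal) := by
          rw [Finset.sum_const, Finset.card_univ, Fintype.card_fin]
          rw [← EReal.coe_nsmul]
          norm_cast
          rw [nsmul_eq_mul]
  have h2 : (B : EReal) ≤ wV.w (T v) := (hbounds _ hv).1
  have h3 : ((B - s : ℝ) : EReal) ≤ wV.w (T v) - (s : EReal) := by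
    rw [EReal.coe_sub]
    rw [sub_eq_add_neg, sub_eq_add_neg]
    exact add_le_add_left h2 _
  have h4 : ((B - k * A : ℝ) : EReal) ≤ ((B - s : ℝ) : EReal) := by
    rw [EReal.coe_le_coe_iff]
    have : s ≤ k * A := by exact_mod_cast h1
    linarith
  refine (h4.trans h3).trans ?_
  rw [← hs]
  exact le_mwt wV wV T v hvi

lemma pweight_vanish (wV : Weight V) {A B : ℝ} (hA : A < 0)
    (hbounds : ∀ v : V, v ≠ 0 → (B : EReal) ≤ wV.w v ∧ wV.w v ≤ (A : EReal))
    (p : PolyMap V V) (hp : pweight wV wV p < (B : EReal)) :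
    ∀ k, p.comp k = 0 := by
  intro k
  by_contra hT
  have h1 := mwt_lower wV hbounds (p.comp k) hT
  have h2 : ((B : ℝ) : EReal) ≤ ((B - k * A : ℝ) : EReal) := by
    rw [EReal.coe_le_coe_iff]
    have : (k : ℝ) * A ≤ 0 := mul_nonpos_of_nonneg_of_nonpos (Nat.cast_nonneg k) hA.le
    linarith
  have := (h2.trans h1).trans (mwt_le_pweight wV p k)
  exact absurd hp (not_lt.2 this)

lemma eval_zero_of_comps (p : PolyMap V V) (h : ∀ k, p.comp k = 0) (x : V) :
    p.eval x = 0 := by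
  rw [PolyMap.eval]
  refine Finset.sum_eq_zero fun k _ => ?_
  rw [h k]
  rfl

lemma degree_bound (wV : Weight V) {A B : ℝ} (hA : A < 0) (hBA : B ≤ A)
    (hbounds : ∀ v : V, v ≠ 0 → (B : EReal) ≤ wV.w v ∧ wV.w v ≤ (A : EReal)) :
    ∃ N : ℕ, ∀ p : PolyMap V V, pweight wV wV p ≤ 0 → ∀ k, N < k → p.comp k = 0 := by
  refine ⟨Nat.ceil (B / A), fun p hp k hk => ?_⟩
  by_contra hT
  have h1 := mwt_lower wV hbounds (p.comp k) hT
  have h2 : (0 : EReal) < ((B - k * A : ℝ) : EReal) := by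
    have hk2 : (B / A) < (k : ℝ) := by
      calc (B / A) ≤ (Nat.ceil (B / A) : ℝ) := Nat.le_ceil _
        _ < (k : ℝ) := by exact_mod_cast hk
    have : (k : ℝ) * A < B := by
      have := (div_lt_iff_of_neg hA).1 hk2
      linarith
    have hpos : (0 : ℝ) < B - k * A := by linarith
    exact_mod_cast hpos
  have h3 := (h1.trans (mwt_le_pweight wV p k)).trans hp
  exact absurd (h2.trans_le h1) (not_lt.2 ((mwt_le_pweight wV p k).trans hp))

end boundsec

section invsec
variable {V : Type*} [AddCommGroup V] [Module ℝ V]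

noncomputable def zeroPoly : PolyMap V V :=
  PolyMap.mk' 0 (fun _ => 0) (fun _ _ => rfl)

lemma zeroPoly_eval (x : V) : (zeroPoly : PolyMap V V).eval x = 0 := by
  rw [zeroPoly, PolyMap.mk'_eval]
  simp

lemma zeroPoly_pweight (wV : Weight V) : pweight wV wV (zeroPoly : PolyMap V V) ≤ ⊥ :=
  PolyMap.mk'_pweight wV _ _ _ _ fun k => by rw [mwt_zero]

lemma zeroPoly_comp (k : ℕ) : (zeroPoly : PolyMap V V).comp k = 0 :=
  PolyMap.mk'_comp_zero _ _ _ _ rfl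

noncomputable def idPoly : PolyMap V V := linPoly LinearMap.id

lemma idPoly_eval (x : V) : (idPoly : PolyMap V V).eval x = x := by
  rw [idPoly, linPoly_eval]; rfl

lemma idPoly_pweight (wV : Weight V) : pweight wV wV (idPoly : PolyMap V V) ≤ 0 :=
  linPoly_pweight wV _ fun x => le_of_eq (by rfl)

lemma linPoly_comp_zero (L : V →ₗ[ℝ] V) : (linPoly L).comp 0 = 0 :=
  PolyMap.mk'_comp_zero _ _ _ _ rfl

lemma idPoly_comp_zero : (idPoly : PolyMap V V).comp 0 = 0 := linPoly_comp_zero _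

lemma coe_le_zero {r : ℝ} (h : r ≤ 0) : (r : EReal) ≤ 0 := by
  rw [← EReal.coe_zero]
  exact_mod_cast h

/-- Right inverse for strictly subresonant perturbations of the identity. -/
lemma ssr_right_inv (wV : Weight V) [FiniteDimensional ℝ V]
    (hneg : ∀ v : V, v ≠ 0 → wV.w v < 0)
    (Pf : PolyMap V V) (hf : pweight wV wV Pf < 0) :
    ∃ Pg : PolyMap V V, pweight wV wV Pg < 0 ∧
      ∀ x, (x + Pg.eval x) + Pf.eval (x + Pg.eval x) = x := by
  classical
  obtain ⟨A, B, hA, hBA, hbounds⟩ := weight_bounds wV hneg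
  obtain ⟨r, hr1, hr2⟩ : ∃ r : ℝ, pweight wV wV Pf ≤ (r : EReal) ∧ r < 0 := by
    by_cases hbot : pweight wV wV Pf = ⊥
    · exact ⟨-1, by rw [hbot]; exact bot_le, by norm_num⟩
    · refine ⟨(pweight wV wV Pf).toReal,
        le_of_eq (EReal.coe_toReal (ne_top_of_lt hf) hbot).symm, ?_⟩
      have hco := EReal.coe_toReal (ne_top_of_lt hf) hbot
      rw [← EReal.coe_lt_coe_iff (y := 0)]
      rw [hco, EReal.coe_zero]
      exact hf
  have hr0 : (r : EReal) ≤ 0 := coe_le_zero hr2.le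
  set ψ : ℕ → V → V := fun n => Nat.rec (motive := fun _ => V → V)
    (fun x => x) (fun _ prev x => x - Pf.eval (prev x)) n with hψ
  have hψ0 : ∀ x, ψ 0 x = x := fun _ => rfl
  have hψs : ∀ n x, ψ (n + 1) x = x - Pf.eval (ψ n x) := fun _ _ => rfl
  have main : ∀ n : ℕ, ∃ G D : PolyMap V V,
      (∀ x, ψ n x = x + G.eval x) ∧ pweight wV wV G ≤ (r : EReal) ∧
      (∀ x, ψ (n + 1) x = ψ n x + D.eval x) ∧
      pweight wV wV D ≤ ((((n : ℝ) + 1) * r : ℝ) : EReal) := by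
    intro n
    induction n with
    | zero =>
      obtain ⟨D, hDe, hDw, _⟩ := negPoly Pf wV
      refine ⟨zeroPoly, D, ?_, ?_, ?_, ?_⟩
      · intro x; rw [hψ0, zeroPoly_eval, add_zero]
      · exact (zeroPoly_pweight wV).trans bot_le
      · intro x
        rw [hψs 0 x, hψ0 x, hDe x, sub_eq_add_neg]
      · refine (hDw.trans hr1).trans (le_of_eq ?_)
        norm_num
    | succ n ih =>
      obtain ⟨G, D, hGe, hGw, hDe, hDw⟩ := ih
      have hDw0 : pweight wV wV D ≤ 0 := by
        refine hDw.trans (coe_le_zero ?_)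
        have : (0 : ℝ) ≤ (n : ℝ) + 1 := by positivity
        nlinarith
      obtain ⟨Pa, hPae, hPaw, _, _⟩ := addPoly wV idPoly G
      have hPaev : ∀ x, Pa.eval x = ψ n x := by
        intro x; rw [hPae x, idPoly_eval, ← hGe x]
      have hPaw0 : pweight wV wV Pa ≤ 0 := hPaw 0 (idPoly_pweight wV) (hGw.trans hr0)
      obtain ⟨Pb, hPbe, hPbw, _, _⟩ := addPoly wV Pa D
      have hPbev : ∀ x, Pb.eval x = ψ (n + 1) x := by
        intro x; rw [hPbe x, hPaev x, ← hDe x]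
      have hPbw0 : pweight wV wV Pb ≤ 0 := hPbw 0 hPaw0 hDw0
      have hab : ∀ x, Pb.eval x = Pa.eval x + D.eval x := hPbe
      obtain ⟨E, hEe, hEw, _⟩ := telescope wV Pf Pa Pb D hab hPaw0 hPbw0
      obtain ⟨D', hD'e, hD'w, _⟩ := negPoly E wV
      obtain ⟨G', hG'e, hG'w, _, _⟩ := addPoly wV G D
      refine ⟨G', D', ?_, ?_, ?_, ?_⟩
      · intro x
        rw [hDe x, hGe x, hG'e x, add_assoc]
      · refine hG'w (r : EReal) hGw (hDw.trans ?_)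
        rw [EReal.coe_le_coe_iff]
        nlinarith [Nat.cast_nonneg (α := ℝ) n]
      · intro x
        rw [hψs (n + 1) x, hD'e x]
        have h5 : Pf.eval (ψ (n + 1) x) = Pf.eval (ψ n x) + E.eval x := by
          rw [← hPbev x, ← hPaev x]
          exact hEe x
        rw [h5, hψs n x]
        abel
      · refine hD'w.trans (hEw.trans ?_)
        have h6 : pweight wV wV Pf + pweight wV wV D ≤
            (r : EReal) + ((((n : ℝ) + 1) * r : ℝ) : EReal) := add_le_add hr1 hDw
        refine h6.trans (le_of_eq ?_)
        rw [← EReal.coe_add]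
        norm_cast
        push_cast
        ring
  obtain ⟨n0, hn0⟩ := exists_nat_gt (B / r)
  obtain ⟨G, D, hGe, hGw, hDe, hDw⟩ := main n0
  have hvan : pweight wV wV D < (B : EReal) := by
    refine lt_of_le_of_lt hDw ?_
    rw [EReal.coe_lt_coe_iff]
    have h7 : (n0 : ℝ) * r < B := by
      have := (div_lt_iff_of_neg hr2).1 hn0
      linarith
    nlinarith
  have hD0 : ∀ x, D.eval x = 0 :=
    eval_zero_of_comps D (pweight_vanish wV hA hbounds D hvan)
  have hfix : ∀ x, ψ n0 x + Pf.eval (ψ n0 x) = x := by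
    intro x
    have h8 := hψs n0 x
    have h9 : ψ (n0 + 1) x = ψ n0 x := by rw [hDe x, hD0 x, add_zero]
    rw [h9] at h8
    exact eq_sub_iff_add_eq.mp h8
  refine ⟨G, lt_of_le_of_lt hGw ?_, fun x => ?_⟩
  · rw [← EReal.coe_zero, EReal.coe_lt_coe_iff]
    exact hr2
  · rw [← hGe x]
    exact hfix x

end invsec

section invsec2
variable {V : Type*} [AddCommGroup V] [Module ℝ V]

/-- Right inverse for "resonant" perturbations of the identity: subresonant
with vanishing constant and linear parts. -/
lemma res_right_inv (wV : Weight V) [FiniteDimensional ℝ V]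
    (hneg : ∀ v : V, v ≠ 0 → wV.w v < 0)
    (Ps : PolyMap V V) (hs : pweight wV wV Ps ≤ 0)
    (hs0 : Ps.comp 0 = 0) (hs1 : Ps.comp 1 = 0) :
    ∃ Pg : PolyMap V V, pweight wV wV Pg ≤ 0 ∧ Pg.comp 0 = 0 ∧ Pg.comp 1 = 0 ∧
      ∀ x, (x + Pg.eval x) + Ps.eval (x + Pg.eval x) = x := by
  classical
  obtain ⟨A, B, hA, hBA, hbounds⟩ := weight_bounds wV hneg
  obtain ⟨N, hN⟩ := degree_bound wV hA hBA hbounds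
  set ψ : ℕ → V → V := fun n => Nat.rec (motive := fun _ => V → V)
    (fun x => x) (fun _ prev x => x - Ps.eval (prev x)) n with hψ
  have hψ0 : ∀ x, ψ 0 x = x := fun _ => rfl
  have hψs : ∀ n x, ψ (n + 1) x = x - Ps.eval (ψ n x) := fun _ _ => rfl
  have main : ∀ n : ℕ, ∃ G D : PolyMap V V,
      (∀ x, ψ n x = x + G.eval x) ∧ pweight wV wV G ≤ 0 ∧
      G.comp 0 = 0 ∧ G.comp 1 = 0 ∧
      (∀ x, ψ (n + 1) x = ψ n x + D.eval x) ∧ pweight wV wV D ≤ 0 ∧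
      (∀ j, j < n + 2 → D.comp j = 0) := by
    intro n
    induction n with
    | zero =>
      obtain ⟨D, hDe, hDw, hDz⟩ := negPoly Ps wV
      refine ⟨zeroPoly, D, ?_, ?_, ?_, ?_, ?_, ?_, ?_⟩
      · intro x; rw [hψ0, zeroPoly_eval, add_zero]
      · exact (zeroPoly_pweight wV).trans bot_le
      · exact zeroPoly_comp 0
      · exact zeroPoly_comp 1
      · intro x
        rw [hψs 0 x, hψ0 x, hDe x, sub_eq_add_neg]
      · exact hDw.trans hs
      · intro j hj
        match j, hj with
        | 0, _ => exact hDz 0 hs0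
        | 1, _ => exact hDz 1 hs1
    | succ n ih =>
      obtain ⟨G, D, hGe, hGw, hG0, hG1, hDe, hDw, hDz⟩ := ih
      obtain ⟨Pa, hPae, hPaw, hPaz, _⟩ := addPoly wV idPoly G
      have hPaev : ∀ x, Pa.eval x = ψ n x := by
        intro x; rw [hPae x, idPoly_eval, ← hGe x]
      have hPaw0 : pweight wV wV Pa ≤ 0 := hPaw 0 (idPoly_pweight wV) hGw
      have hPa0 : Pa.comp 0 = 0 := hPaz 0 idPoly_comp_zero hG0
      obtain ⟨Pb, hPbe, hPbw, hPbz, _⟩ := addPoly wV Pa D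
      have hPbev : ∀ x, Pb.eval x = ψ (n + 1) x := by
        intro x; rw [hPbe x, hPaev x, ← hDe x]
      have hPbw0 : pweight wV wV Pb ≤ 0 := hPbw 0 hPaw0 hDw
      have hPb0 : Pb.comp 0 = 0 := hPbz 0 hPa0 (hDz 0 (by omega))
      obtain ⟨E, hEe, hEw, hEz⟩ := telescope wV Ps Pa Pb D hPbe hPaw0 hPbw0
      obtain ⟨D', hD'e, hD'w, hD'z⟩ := negPoly E wV
      obtain ⟨G', hG'e, hG'w, hG'z, _⟩ := addPoly wV G D
      refine ⟨G', D', ?_, ?_, ?_, ?_, ?_, ?_, ?_⟩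
      · intro x
        rw [hDe x, hGe x, hG'e x, add_assoc]
      · exact hG'w 0 hGw hDw
      · exact hG'z 0 hG0 (hDz 0 (by omega))
      · exact hG'z 1 hG1 (hDz 1 (by omega))
      · intro x
        rw [hψs (n + 1) x, hD'e x]
        have h5 : Ps.eval (ψ (n + 1) x) = Ps.eval (ψ n x) + E.eval x := by
          rw [← hPbev x, ← hPaev x]
          exact hEe x
        rw [h5, hψs n x]
        abel
      · refine hD'w.trans (hEw.trans ?_)
        calc pweight wV wV Ps + pweight wV wV D ≤ 0 + 0 := add_le_add hs hDw
          _ = 0 := by rw [add_zero]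
      · intro j hj
        refine hD'z j (hEz (n + 2) hs0 hs1 hPa0 hPb0 hDz j (by omega))
  obtain ⟨G, D, hGe, hGw, hG0, hG1, hDe, hDw, hDz⟩ := main N
  have hDall : ∀ k, D.comp k = 0 := by
    intro k
    by_cases hk : k < N + 2
    · exact hDz k hk
    · exact hN D hDw k (by omega)
  have hD0 : ∀ x, D.eval x = 0 := eval_zero_of_comps D hDall
  have hfix : ∀ x, ψ N x + Ps.eval (ψ N x) = x := by
    intro x
    have h8 := hψs N x
    have h9 : ψ (N + 1) x = ψ N x := by rw [hDe x, hD0 x, add_zero]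
    rw [h9] at h8
    exact eq_sub_iff_add_eq.mp h8
  refine ⟨G, hGw, hG0, hG1, fun x => ?_⟩
  rw [← hGe x]
  exact hfix x

end invsec2

section twosided
variable {V : Type*} [AddCommGroup V] [Module ℝ V]

lemma ereal_add_lt_of_neg {a b : EReal} (ha : a < 0) (hb1 : b ≠ ⊥) (hb2 : b ≠ ⊤) :
    a + b < b := by
  induction b with
  | bot => exact absurd rfl hb1
  | coe b =>
    induction a with
    | bot => rw [EReal.bot_add]; exact bot_lt_iff_ne_bot.2 (EReal.coe_ne_bot b)
    | coe a =>
      rw [← EReal.coe_add, EReal.coe_lt_coe_iff]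
      have : a < 0 := by exact_mod_cast ha
      linarith
    | top => exact absurd ha (by simp)
  | top => exact absurd rfl hb2

lemma mapPoly (wV : Weight V) (L : V →ₗ[ℝ] V) (hL : ∀ x, wV.w (L x) ≤ wV.w x)
    (P : PolyMap V V) :
    ∃ p : PolyMap V V, (∀ x, p.eval x = L (P.eval x)) ∧
      pweight wV wV p ≤ pweight wV wV P ∧
      (∀ k, P.comp k = 0 → p.comp k = 0) := by
  have h0 : ∀ k, P.deg < k → L.compMultilinearMap (P.comp k) = 0 := by
    intro k hk
    rw [P.zero_of_gt k hk]
    ext v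
    simp
  refine ⟨PolyMap.mk' P.deg (fun k => L.compMultilinearMap (P.comp k)) h0, ?_, ?_, ?_⟩
  · intro x
    rw [PolyMap.mk'_eval, PolyMap.eval, map_sum]
    rfl
  · refine PolyMap.mk'_pweight wV _ _ _ _ fun k => ?_
    exact (mwt_compLinear_le wV L hL (P.comp k)).trans (mwt_le_pweight wV P k)
  · intro k hk
    refine PolyMap.mk'_comp_zero _ _ _ _ ?_
    rw [hk]
    ext v
    simp

/-- Two-sided inverse, strictly subresonant case. -/
lemma ssr_inv (wV : Weight V) [FiniteDimensional ℝ V]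
    (hneg : ∀ v : V, v ≠ 0 → wV.w v < 0)
    (Pf : PolyMap V V) (hf : pweight wV wV Pf < 0) :
    ∃ Pg : PolyMap V V, pweight wV wV Pg < 0 ∧
      (∀ x, (x + Pg.eval x) + Pf.eval (x + Pg.eval x) = x) ∧
      (∀ x, (x + Pf.eval x) + Pg.eval (x + Pf.eval x) = x) := by
  obtain ⟨Pg, hgw, h1⟩ := ssr_right_inv wV hneg Pf hf
  obtain ⟨Ph, hhw, h2⟩ := ssr_right_inv wV hneg Pg hgw
  have heq : ∀ x, x + Pf.eval x = x + Ph.eval x := by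
    intro x
    have ha := h1 (x + Ph.eval x)
    rw [h2 x] at ha
    exact ha
  refine ⟨Pg, hgw, h1, fun x => ?_⟩
  rw [heq x]
  exact h2 x

/-- Two-sided inverse, resonant case. -/
lemma res_inv (wV : Weight V) [FiniteDimensional ℝ V]
    (hneg : ∀ v : V, v ≠ 0 → wV.w v < 0)
    (Ps : PolyMap V V) (hs : pweight wV wV Ps ≤ 0)
    (hs0 : Ps.comp 0 = 0) (hs1 : Ps.comp 1 = 0) :
    ∃ Pg : PolyMap V V, pweight wV wV Pg ≤ 0 ∧
      (∀ x, (x + Pg.eval x) + Ps.eval (x + Pg.eval x) = x) ∧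
      (∀ x, (x + Ps.eval x) + Pg.eval (x + Ps.eval x) = x) := by
  obtain ⟨Pg, hgw, hg0, hg1, h1⟩ := res_right_inv wV hneg Ps hs hs0 hs1
  obtain ⟨Ph, hhw, hh0, hh1, h2⟩ := res_right_inv wV hneg Pg hgw hg0 hg1
  have heq : ∀ x, x + Ps.eval x = x + Ph.eval x := by
    intro x
    have ha := h1 (x + Ph.eval x)
    rw [h2 x] at ha
    exact ha
  refine ⟨Pg, hgw, h1, fun x => ?_⟩
  rw [heq x]
  exact h2 x

end twosided

section srinv
variable {V : Type*} [AddCommGroup V] [Module ℝ V]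

/-- Inverse of an invertible subresonant polynomial map is subresonant polynomial. -/
lemma sr_inv (wV : Weight V) [FiniteDimensional ℝ V]
    (hneg : ∀ v : V, v ≠ 0 → wV.w v < 0)
    (P : PolyMap V V) (hPw : pweight wV wV P ≤ 0)
    (hPbij : Function.Bijective (fun v : V => P.comp 1 (fun _ => v))) :
    ∃ Q : PolyMap V V, pweight wV wV Q ≤ 0 ∧
      (∀ x, P.eval (Q.eval x) = x) ∧ (∀ x, Q.eval (P.eval x) = x) := by
  classical
  set Lmap : V →ₗ[ℝ] V :=
    (MultilinearMap.ofSubsingleton ℝ V V (0 : Fin 1)).symm (P.comp 1) with hLdef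
  have hLfun : ∀ x, Lmap x = P.comp 1 (fun _ => x) := fun x => rfl
  have hLmapw : ∀ x, wV.w (Lmap x) ≤ wV.w x := by
    intro x
    rw [hLfun x]
    refine (w_apply_le wV wV (P.comp 1) (fun _ => x)).trans ?_
    rw [Fin.sum_univ_one]
    calc mwt wV wV (P.comp 1) + wV.w x ≤ 0 + wV.w x :=
          add_le_add_left ((mwt_le_pweight wV P 1).trans hPw) _
      _ = wV.w x := zero_add _
  have hLbij : Function.Bijective Lmap := hPbij
  set e := LinearEquiv.ofBijective Lmap hLbij with hedef
  set Linv : V →ₗ[ℝ] V := (e.symm : V →ₗ[ℝ] V) with hLinvdef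
  have hLL : ∀ y, Lmap (Linv y) = y := fun y => e.apply_symm_apply y
  have hLL' : ∀ x, Linv (Lmap x) = x := fun x => e.symm_apply_apply x
  have hLinvw : ∀ u, wV.w (Linv u) ≤ wV.w u := by
    intro u
    set M : Submodule ℝ V :=
      { carrier := {v | wV.w v ≤ wV.w u}
        add_mem' := fun ha hb => le_trans (wV.add_le _ _) (max_le ha hb)
        zero_mem' := by
          show wV.w 0 ≤ wV.w u
          rw [wV.w_zero]; exact bot_le
        smul_mem' := by
          intro cc v hv
          show wV.w (cc • v) ≤ wV.w u
          by_cases hc : cc = 0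
          · rw [hc, zero_smul, wV.w_zero]; exact bot_le
          · rw [wV.smul_eq cc hc]; exact hv } with hM
    have hmap : ∀ v ∈ M, Lmap v ∈ M := fun v hv => le_trans (hLmapw v) hv
    set Lres := Lmap.restrict hmap with hLres
    have hinj : Function.Injective Lres := by
      intro a b hab
      have h1 : Lmap a.val = Lmap b.val := by
        have := congrArg Subtype.val hab
        exact this
      exact Subtype.ext (hLbij.1 h1)
    have hsurj : Function.Surjective Lres :=
      (LinearMap.injective_iff_surjective).1 hinj
    have humem : u ∈ M := le_refl (wV.w u)
    obtain ⟨m, hm⟩ := hsurj ⟨u, humem⟩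
    have hmv : Lmap m.val = u := congrArg Subtype.val hm
    have : Linv u = m.val := by rw [← hmv, hLL']
    rw [this]
    exact m.2
  -- the constant term
  set c : V := P.comp 0 (fun _ => (0 : V)) with hcdef
  have hc0 : ∀ x : V, P.comp 0 (fun _ => x) = c :=
    fun x => congrArg (P.comp 0) (funext fun i => i.elim0)
  -- the higher-order part
  set d' := max P.deg 1 with hd'
  have h0H : ∀ k, d' < k →
      (if k ≤ 1 then (0 : MultilinearMap ℝ (fun _ : Fin k => V) V) else P.comp k) = 0 := by
    intro k hk
    rw [if_neg (by omega)]
    exact P.zero_of_gt k (by omega)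
  set H := PolyMap.mk' d'
    (fun k => if k ≤ 1 then (0 : MultilinearMap ℝ (fun _ : Fin k => V) V) else P.comp k)
    h0H with hHdef
  have hHw : pweight wV wV H ≤ 0 := by
    refine PolyMap.mk'_pweight wV _ _ _ _ fun k => ?_
    by_cases hk : k ≤ 1
    · rw [if_pos hk, mwt_zero]; exact bot_le
    · rw [if_neg hk]; exact (mwt_le_pweight wV P k).trans hPw
  have hH0 : H.comp 0 = 0 := PolyMap.mk'_comp_zero _ _ _ _ (by norm_num)
  have hH1 : H.comp 1 = 0 := PolyMap.mk'_comp_zero _ _ _ _ (by norm_num)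
  have hdecomp : ∀ x, P.eval x = (c + Lmap x) + H.eval x := by
    intro x
    rw [P.eval_ext d' (le_max_left _ _) x, hHdef, PolyMap.mk'_eval]
    have hsplit : ∀ k ∈ Finset.range (d' + 1), P.comp k (fun _ => x) =
        (if k ≤ 1 then P.comp k (fun _ => x) else 0) +
        (if k ≤ 1 then (0 : MultilinearMap ℝ (fun _ : Fin k => V) V) else P.comp k)
          (fun _ => x) := by
      intro k _
      by_cases hk : k ≤ 1
      · rw [if_pos hk, if_pos hk]
        show P.comp k (fun _ => x) = P.comp k (fun _ => x) + (0 : MultilinearMap ℝ _ _) (fun _ => x)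
        rw [show (0 : MultilinearMap ℝ (fun _ : Fin k => V) V) (fun _ => x) = 0 from rfl, add_zero]
      · rw [if_neg hk, if_neg hk, zero_add]
    rw [Finset.sum_congr rfl hsplit, Finset.sum_add_distrib]
    congr 1
    have hsub : Finset.range 2 ⊆ Finset.range (d' + 1) := by
      refine Finset.range_subset_range.2 ?_
      omega
    rw [← Finset.sum_subset hsub (fun k _ hk => by
      rw [if_neg (by simp only [Finset.mem_range] at hk ⊢; omega)])]
    rw [Finset.sum_range_succ, Finset.sum_range_one]
    rw [if_pos (by norm_num), if_pos (by norm_num)]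
    rw [hc0 x, hLfun x]
  obtain ⟨Ps, hse, hsw', hsz⟩ := mapPoly wV Linv hLinvw H
  have hsw : pweight wV wV Ps ≤ 0 := hsw'.trans hHw
  have hs0 : Ps.comp 0 = 0 := hsz 0 hH0
  have hs1 : Ps.comp 1 = 0 := hsz 1 hH1
  have hρ : ∀ x, P.eval x = c + Lmap (x + Ps.eval x) := by
    intro x
    rw [map_add, hse x, hLL, hdecomp x, add_assoc]
  obtain ⟨Pg, hgw, hgid1, hgid2⟩ := res_inv wV hneg Ps hsw hs0 hs1
  -- the quasi-inverse polynomial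
  have hwc : wV.w (-c) ≤ 0 := by
    rw [wV.w_neg]
    by_cases hc : c = 0
    · rw [hc, wV.w_zero]; exact bot_le
    · exact (hneg c hc).le
  obtain ⟨tP, hte, htw, _, _⟩ := addPoly wV idPoly (constPoly (-c))
  have hteval : ∀ x, tP.eval x = x + -c := by
    intro x; rw [hte x, idPoly_eval, constPoly_eval]
  have htw0 : pweight wV wV tP ≤ 0 :=
    htw 0 (idPoly_pweight wV) ((constPoly_pweight wV (-c)).trans hwc)
  obtain ⟨la, hlae, hlaw', _⟩ := mapPoly wV Linv hLinvw tP
  have hlaw : pweight wV wV la ≤ 0 := hlaw'.trans htw0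
  have hlaeval : ∀ x, la.eval x = Linv (x + -c) := by
    intro x; rw [hlae x, hteval x]
  obtain ⟨Pr, hre, hrw, _, _⟩ := addPoly wV idPoly Pg
  have hrw0 : pweight wV wV Pr ≤ 0 := hrw 0 (idPoly_pweight wV) hgw
  have hreval : ∀ y, Pr.eval y = y + Pg.eval y := by
    intro y; rw [hre y, idPoly_eval]
  obtain ⟨Q, hQe, hQw', _, _⟩ := compPoly wV Pr la hlaw
  have hQw : pweight wV wV Q ≤ 0 := hQw'.trans hrw0
  have hQeval : ∀ x, Q.eval x =
      (Linv (x + -c)) + Pg.eval (Linv (x + -c)) := by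
    intro x
    rw [hQe x, hlaeval x, hreval]
  refine ⟨Q, hQw, ?_, ?_⟩
  · intro x
    rw [hQeval x]
    set y := Linv (x + -c) with hy
    rw [hρ (y + Pg.eval y), hgid1 y, hy, hLL]
    abel
  · intro x
    have harg : P.eval x + -c = Lmap (x + Ps.eval x) := by
      rw [hρ x]; abel
    rw [hQeval (P.eval x), harg, hLL']
    exact hgid2 x

end srinv

/-- `G^{SSR}(V)` is a group under composition, a normal subgroup of the group
`G^{SR}(V)` of invertible subresonant polynomial maps, and (the weight taking
only negative values) it contains all translations. -/
theorem SSR_normal_subgroup_and_translations {V : Type*}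
    [AddCommGroup V] [Module ℝ V] [FiniteDimensional ℝ V]
    (wV : Weight V) (hneg : ∀ v : V, v ≠ 0 → wV.w v < 0) :
    -- identity
    IsSSR wV (id : V → V) ∧
    -- closed under composition
    (∀ φ ψ : V → V, IsSSR wV φ → IsSSR wV ψ → IsSSR wV (φ ∘ ψ)) ∧
    -- closed under inversion
    (∀ φ : V → V, IsSSR wV φ →
      ∃ ψ : V → V, IsSSR wV ψ ∧ φ ∘ ψ = id ∧ ψ ∘ φ = id) ∧
    -- it sits inside G^{SR}(V)
    (∀ φ : V → V, IsSSR wV φ → IsSR wV φ) ∧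
    -- normality in G^{SR}(V): conjugation by an invertible subresonant map
    (∀ φ φinv ψ : V → V, IsSR wV φ → φ ∘ φinv = id → φinv ∘ φ = id →
      IsSSR wV ψ → IsSSR wV (φ ∘ ψ ∘ φinv)) ∧
    -- contains all translations
    (∀ c : V, IsSSR wV (fun x => x + c)) := by
  have hbot0 : (⊥ : EReal) < 0 := bot_lt_iff_ne_bot.2 (by simp)
  refine ⟨?_, ?_, ?_, ?_, ?_, ?_⟩
  -- identity
  · refine ⟨zeroPoly, fun x => ?_, lt_of_le_of_lt (zeroPoly_pweight wV) hbot0⟩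
    rw [zeroPoly_eval, add_zero]
    rfl
  -- composition
  · rintro φ ψ ⟨Pf, hfe, hfw⟩ ⟨Pg, hge, hgw⟩
    obtain ⟨Pψ, hψe, hψw, _, _⟩ := addPoly wV idPoly Pg
    have hψev : ∀ x, Pψ.eval x = ψ x := by
      intro x; rw [hψe x, idPoly_eval, ← hge x]
    have hψw0 : pweight wV wV Pψ ≤ 0 := hψw 0 (idPoly_pweight wV) hgw.le
    obtain ⟨C, hCe, hCw, _, _⟩ := compPoly wV Pf Pψ hψw0
    obtain ⟨h, hhe, hhw, _, _⟩ := addPoly wV Pg C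
    refine ⟨h, fun x => ?_, ?_⟩
    · show φ (ψ x) = x + h.eval x
      rw [hhe x, hCe x, hψev x, hfe (ψ x), hge x, add_assoc]
    · refine lt_of_le_of_lt (hhw (max (pweight wV wV Pg) (pweight wV wV C))
        (le_max_left _ _) (le_max_right _ _)) ?_
      exact max_lt hgw (lt_of_le_of_lt hCw hfw)
  -- inversion
  · rintro φ ⟨Pf, hfe, hfw⟩
    obtain ⟨Pg, hgw, hgid1, hgid2⟩ := ssr_inv wV hneg Pf hfw
    refine ⟨fun x => x + Pg.eval x, ⟨Pg, fun x => rfl, hgw⟩, ?_, ?_⟩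
    · funext x
      show φ (x + Pg.eval x) = x
      rw [hfe (x + Pg.eval x)]
      exact hgid1 x
    · funext x
      show φ x + Pg.eval (φ x) = x
      rw [hfe x]
      exact hgid2 x
  -- inclusion into SR
  · rintro φ ⟨Pf, hfe, hfw⟩
    obtain ⟨P', hP'e, hP'w, _, hP'diag⟩ := addPoly wV idPoly Pf
    refine ⟨P', fun x => ?_, hP'w 0 (idPoly_pweight wV) hfw.le, ?_⟩
    · rw [hfe x, hP'e x, idPoly_eval]
    · set L1 : V →ₗ[ℝ] V :=
        (MultilinearMap.ofSubsingleton ℝ V V (0 : Fin 1)).symm (Pf.comp 1) with hL1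
      set Ml : V →ₗ[ℝ] V := LinearMap.id + L1 with hMl
      have hfun : (fun v : V => P'.comp 1 (fun _ => v)) = ⇑Ml := by
        funext v
        rw [hP'diag 1 v]
        have h1 : (idPoly : PolyMap V V).comp 1 (fun _ => v) = v := by
          rw [idPoly, linPoly_comp_one]
          rfl
        rw [h1]
        rfl
      rw [hfun]
      have hker : ∀ v : V, Ml v = 0 → v = 0 := by
        intro v hv
        by_contra hv0
        have h2 : L1 v = -v := by
          have h2' : v + L1 v = 0 := hv
          exact eq_neg_of_add_eq_zero_right h2'
        have h3 : wV.w (L1 v) ≤ mwt wV wV (Pf.comp 1) + wV.w v := by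
          refine (w_apply_le wV wV (Pf.comp 1) (fun _ => v)).trans ?_
          rw [Fin.sum_univ_one]
        have h4 : wV.w (L1 v) = wV.w v := by rw [h2, wV.w_neg]
        have h5 : mwt wV wV (Pf.comp 1) + wV.w v < wV.w v :=
          ereal_add_lt_of_neg (lt_of_le_of_lt (mwt_le_pweight wV Pf 1) hfw)
            (fun hb => hv0 ((wV.eq_bot_iff v).1 hb)) (wV.ne_top v)
        rw [h4] at h3
        exact absurd (lt_of_le_of_lt h3 h5) (lt_irrefl _)
      have hinj : Function.Injective Ml := by
        intro a b hab
        have h6 : Ml (a - b) = 0 := by rw [map_sub, hab, sub_self]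
        have := hker _ h6
        exact sub_eq_zero.1 this
      exact ⟨hinj, (LinearMap.injective_iff_surjective).1 hinj⟩
  -- normality
  · rintro φ φinv ψ ⟨P, hPe, hPw, hPbij⟩ hl hr ⟨Pf, hfe, hfw⟩
    obtain ⟨Q, hQw, hQP, hPQ⟩ := sr_inv wV hneg P hPw hPbij
    have hlpt : ∀ x, φ (φinv x) = x := fun x => congrFun hl x
    have hfinv : ∀ x, φinv x = Q.eval x := by
      intro x
      have h7 : Q.eval (P.eval (φinv x)) = φinv x := hPQ (φinv x)
      rw [← hPe (φinv x), hlpt x] at h7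
      exact h7.symm
    obtain ⟨Pψ, hψe, hψw, _, _⟩ := addPoly wV idPoly Pf
    have hψw0 : pweight wV wV Pψ ≤ 0 := hψw 0 (idPoly_pweight wV) hfw.le
    obtain ⟨E, hEe, hEw, _⟩ := telescope wV P idPoly Pψ Pf hψe (idPoly_pweight wV) hψw0
    have hEw0 : pweight wV wV E < 0 := by
      refine lt_of_le_of_lt hEw ?_
      calc pweight wV wV P + pweight wV wV Pf ≤ 0 + pweight wV wV Pf :=
            add_le_add_left hPw _
        _ = pweight wV wV Pf := zero_add _
        _ < 0 := hfw
    obtain ⟨h, hhe, hhw, _, _⟩ := compPoly wV E Q hQw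
    refine ⟨h, fun x => ?_, lt_of_le_of_lt hhw hEw0⟩
    · show φ (ψ (φinv x)) = x + h.eval x
      have h8 : ψ (φinv x) = Pψ.eval (φinv x) := by
        rw [hψe (φinv x), idPoly_eval, ← hfe (φinv x)]
      rw [h8, hPe (Pψ.eval (φinv x)), hEe (φinv x), idPoly_eval, ← hPe (φinv x),
        hlpt x, hfinv x, ← hhe x]
  -- translations
  · intro c
    refine ⟨constPoly c, fun x => by rw [constPoly_eval], ?_⟩
    refine lt_of_le_of_lt (constPoly_pweight wV c) ?_
    by_cases hc : c = 0
    · rw [hc, wV.w_zero]; exact hbot0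
    · exact hneg c hc
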